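/- Let α > 0, ρ > 0, let s be a complex number with Re(s)/ρ + α < 1, and let f : (0,∞) → ℂ be such that t ↦ t^{Re(s) + αρ - 1} f(t) is integrable on (0,∞) and the Mellin transform of the function x ↦ (ρI^α_{0+} f)(x) exists at s. Then the Mellin transform of the generalized fractional integral satisfies M[ρI^α_{0+} f](s) = [Γ(1 - s/ρ - α) / (Γ(1 - s/ρ) ρ^α)] · M[f](s + αρ). -/

import Mathlib

/-!
The substitution `τ = u x` writes `(ρI^α_{0+} f)(x)` as `ρ^{1-α} / Γ(α) · x^{αρ}` times the
multiplicative convolution `∫₀¹ k(u) f(u x) du` with `k(u) = u^{ρ-1} (1 - u^ρ)^{α-1}`, so its Mellin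
transform at `s` is the Mellin transform of that convolution at `z = s + αρ`. By Fubini, justified
by the integrability of `t^{Re z - 1} f(t)` on `(0, ∞)` and of `u^{-Re z} k(u)` on `(0, 1)`, the
latter factors as `(∫₀¹ u^{-z} k(u) du) · M[f](z)`, and the substitution `v = u^ρ` turns the first
factor into `B(1 - s/ρ - α, α) / ρ`.
-/

open MeasureTheory Filter Real Complex

/-- The generalized (Katugampola) left-sided fractional integral of order `α`
with parameter `ρ` and base point `0`, for a complex-valued function `f`. -/
noncomputable def genFracIntegral (ρ α : ℝ) (f : ℝ → ℂ) (x : ℝ) : ℂ :=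
  (ρ ^ (1 - α) / Real.Gamma α) •
    ∫ τ in (0 : ℝ)..x, (τ ^ (ρ - 1) * (x ^ ρ - τ ^ ρ) ^ (α - 1)) • f τ

open Set

section Rpow

variable {E : Type*} [NormedAddCommGroup E] [NormedSpace ℝ E] {ρ : ℝ}

theorem rpow_image_Ioo_zero_one (hρ : 0 < ρ) : (· ^ ρ) '' Ioo (0 : ℝ) 1 = Ioo 0 1 := by
  have h := (continuous_rpow_const hρ.le).continuousOn.image_Ioo_of_strictMonoOn zero_le_one
    ((strictMonoOn_rpow_Ici_of_exponent_pos hρ).mono Icc_subset_Ici_self)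
  simpa [zero_rpow hρ.ne'] using h

theorem integrableOn_Ioo_comp_rpow_iff (φ : ℝ → E) (hρ : 0 < ρ) :
    IntegrableOn (fun u => (ρ * u ^ (ρ - 1)) • φ (u ^ ρ)) (Ioo 0 1) ↔ IntegrableOn φ (Ioo 0 1) := by
  conv_rhs => rw [← rpow_image_Ioo_zero_one hρ]
  rw [integrableOn_image_iff_integrableOn_abs_deriv_smul measurableSet_Ioo
    (fun u hu => (hasDerivAt_rpow_const (Or.inl hu.1.ne')).hasDerivWithinAt)
    ((rpow_left_injOn hρ.ne').mono fun u hu => hu.1.le)]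
  refine integrableOn_congr_fun (fun u hu => ?_) measurableSet_Ioo
  rw [abs_of_pos (by have := hu.1; positivity)]

theorem integral_Ioo_comp_rpow (φ : ℝ → E) (hρ : 0 < ρ) :
    ∫ u in Ioo 0 1, (ρ * u ^ (ρ - 1)) • φ (u ^ ρ) = ∫ v in Ioo 0 1, φ v := by
  nth_rw 2 [← rpow_image_Ioo_zero_one hρ]
  rw [integral_image_eq_integral_abs_deriv_smul measurableSet_Ioo
    (fun u hu => (hasDerivAt_rpow_const (Or.inl hu.1.ne')).hasDerivWithinAt)
    ((rpow_left_injOn hρ.ne').mono fun u hu => hu.1.le)]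
  refine setIntegral_congr_fun measurableSet_Ioo (fun u hu => ?_)
  rw [abs_of_pos (by have := hu.1; positivity)]

theorem aestronglyMeasurable_of_integrableOn_rpow_smul {f : ℝ → E} {c : ℝ}
    (hf : IntegrableOn (fun t : ℝ => t ^ c • f t) (Ioi 0)) :
    AEStronglyMeasurable f (volume.restrict (Ioi 0)) := by
  refine ((measurable_id.pow_const (-c)).aestronglyMeasurable.smul hf.aestronglyMeasurable).congr ?_
  filter_upwards [ae_restrict_mem measurableSet_Ioi] with t (ht : 0 < t)
  rw [Pi.smul_apply', id, smul_smul, ← rpow_add ht, neg_add_cancel, rpow_zero, one_smul]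

end Rpow

section MellinConvolution

variable {E : Type*} [NormedAddCommGroup E] [NormedSpace ℂ E] {f : ℝ → E} {s : ℂ}

theorem mellinConvergent_iff_integrableOn_rpow_smul
    (hf : AEStronglyMeasurable f (volume.restrict (Ioi 0))) :
    MellinConvergent f s ↔ IntegrableOn (fun t : ℝ => t ^ (s.re - 1) • f t) (Ioi 0) := by
  have hnorm : EqOn (fun t : ℝ => ‖t ^ (s.re - 1) • f t‖) (fun t => t ^ (s.re - 1) * ‖f t‖)
      (Ioi 0) := fun t (ht : 0 < t) => by
    simp only [norm_smul, norm_of_nonneg (rpow_nonneg ht.le _)]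
  rw [MellinConvergent, mellin_convergent_iff_norm subset_rfl measurableSet_Ioi hf,
    ← integrableOn_congr_fun hnorm measurableSet_Ioi]
  exact integrable_norm_iff ((measurable_id.pow_const _).aestronglyMeasurable.smul hf)

theorem ofReal_cpow_sub_one_eq_cpow_neg_mul_mul_cpow {u x : ℝ} (hu : 0 < u) (hx : 0 < x) (s : ℂ) :
    (x : ℂ) ^ (s - 1) = (u : ℂ) ^ (-s) * u * ((u * x : ℝ) : ℂ) ^ (s - 1) := by
  have hu' : (u : ℂ) ≠ 0 := ofReal_ne_zero.mpr hu.ne'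
  have hu1 : (u : ℂ) ^ (-s) * u * (u : ℂ) ^ (s - 1) = 1 :=
    calc (u : ℂ) ^ (-s) * u * (u : ℂ) ^ (s - 1) = (u : ℂ) ^ (-s + 1 + (s - 1)) := by
          rw [cpow_add _ _ hu', cpow_add _ _ hu', cpow_one]
      _ = 1 := by rw [show -s + 1 + (s - 1) = 0 by ring, cpow_zero]
  rw [ofReal_mul, mul_cpow_ofReal_nonneg hu.le hx.le, ← mul_assoc, hu1, one_mul]

theorem mellin_setIntegral_smul_comp_mul [CompleteSpace E] {S : Set ℝ} {K : ℝ → ℂ}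
    (hS : MeasurableSet S) (hS0 : S ⊆ Ioi 0) (hfm : StronglyMeasurable f)
    (hf : MellinConvergent f s) (hK : IntegrableOn (fun u : ℝ => (u : ℂ) ^ (-s) * K u) S) :
    mellin (fun x => ∫ u in S, K u • f (u * x)) s =
      (∫ u in S, (u : ℂ) ^ (-s) * K u) • mellin f s := by
  set h : ℝ → E := fun t => (t : ℂ) ^ (s - 1) • f t
  set k : ℝ → ℂ := fun u => (u : ℂ) ^ (-s) * K u
  set Q : ℝ → ℝ → E := fun u x => (k u * u) • h (u * x)
  have hinner : ∀ u ∈ S, ∫ x in Ioi 0, Q u x = k u • mellin f s := by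
    intro u hu
    have hu' : (u : ℂ) ≠ 0 := ofReal_ne_zero.mpr (hS0 hu).ne'
    rw [integral_smul, integral_comp_mul_left_Ioi h 0 (hS0 hu), mul_zero, ← coe_smul, smul_smul,
      ofReal_inv, mul_assoc, mul_inv_cancel₀ hu', mul_one]
    rfl
  have hint : Integrable (Function.uncurry Q)
      ((volume.restrict S).prod (volume.restrict (Ioi 0))) := by
    have hhm : StronglyMeasurable h :=
      (measurable_ofReal.pow_const _).stronglyMeasurable.smul hfm
    have hQm : AEStronglyMeasurable (Function.uncurry Q)
        ((volume.restrict S).prod (volume.restrict (Ioi 0))) :=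
      ((hK.aestronglyMeasurable.mul continuous_ofReal.aestronglyMeasurable).comp_fst).smul
        (hhm.comp_measurable (measurable_fst.mul measurable_snd)).aestronglyMeasurable
    refine (integrable_prod_iff hQm).mpr ⟨?_, ?_⟩
    · filter_upwards [ae_restrict_mem hS] with u hu
      have hsection := (integrableOn_Ioi_comp_mul_left_iff h 0 (hS0 hu)).mpr
        (by rw [mul_zero]; exact hf)
      exact hsection.smul (k u * u)
    · refine (hK.norm.mul_const (∫ t in Ioi 0, ‖h t‖)).congr ?_
      filter_upwards [ae_restrict_mem hS] with u hu
      have hu0 : 0 < u := hS0 hu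
      simp only [Function.uncurry_apply_pair, Q, norm_smul, integral_const_mul, norm_mul,
        norm_real, Real.norm_of_nonneg hu0.le]
      rw [integral_comp_mul_left_Ioi (fun t => ‖h t‖) 0 hu0, mul_zero, smul_eq_mul]
      field_simp
  calc mellin (fun x => ∫ u in S, K u • f (u * x)) s
      = ∫ x in Ioi 0, ∫ u in S, Q u x := by
        refine setIntegral_congr_fun measurableSet_Ioi fun x hx => ?_
        rw [← integral_smul]
        refine setIntegral_congr_fun hS fun u hu => ?_
        simp only [Q, h, k, smul_smul, ofReal_cpow_sub_one_eq_cpow_neg_mul_mul_cpow (hS0 hu) hx s]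
        ring_nf
    _ = ∫ u in S, ∫ x in Ioi 0, Q u x := (integral_integral_swap hint).symm
    _ = ∫ u in S, k u • mellin f s := setIntegral_congr_fun hS hinner
    _ = _ := integral_smul_const _ _

end MellinConvolution

noncomputable def genFracKernel (ρ α u : ℝ) : ℝ := u ^ (ρ - 1) * (1 - u ^ ρ) ^ (α - 1)

section GenFracKernel

variable {ρ α : ℝ}

/-- The right side is the integrand of `betaIntegral (1 - z / ρ) α` after the substitution
`v = u ^ ρ`. -/
theorem cpow_neg_mul_genFracKernel_eq (hρ : 0 < ρ) (z : ℂ) {u : ℝ} (hu : u ∈ Ioo (0 : ℝ) 1) :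
    (u : ℂ) ^ (-z) * genFracKernel ρ α u = (ρ : ℂ)⁻¹ • ((ρ * u ^ (ρ - 1)) •
      (((u ^ ρ : ℝ) : ℂ) ^ (1 - z / ρ - 1) * (1 - ((u ^ ρ : ℝ) : ℂ)) ^ ((α : ℂ) - 1))) := by
  have hρ' : (ρ : ℂ) ≠ 0 := ofReal_ne_zero.mpr hρ.ne'
  have h1 : 0 ≤ 1 - u ^ ρ := sub_nonneg.mpr (rpow_le_one hu.1.le hu.2.le hρ.le)
  have h2 : (1 - ((u ^ ρ : ℝ) : ℂ)) ^ ((α : ℂ) - 1) = ((1 - u ^ ρ) ^ (α - 1) : ℝ) := by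
    rw [ofReal_cpow h1]
    push_cast
    rfl
  rw [h2, ← cpow_mul_ofReal_nonneg hu.1.le, sub_sub_cancel_left, mul_neg, mul_div_cancel₀ _ hρ',
    genFracKernel, real_smul, smul_eq_mul]
  push_cast
  field_simp

theorem integrableOn_cpow_neg_mul_genFracKernel (hρ : 0 < ρ) (hα : 0 < α) {z : ℂ}
    (hz : 0 < (1 - z / ρ).re) :
    IntegrableOn (fun u : ℝ => (u : ℂ) ^ (-z) * genFracKernel ρ α u) (Ioo 0 1) := by
  have hβ := ((intervalIntegrable_iff_integrableOn_Ioc_of_le zero_le_one).mp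
    (betaIntegral_convergent hz (v := α) (by simpa using hα))).mono_set Ioo_subset_Ioc_self
  rw [integrableOn_congr_fun (fun u hu => cpow_neg_mul_genFracKernel_eq hρ z hu) measurableSet_Ioo]
  exact ((integrableOn_Ioo_comp_rpow_iff _ hρ).mpr hβ).smul (ρ : ℂ)⁻¹

theorem integral_cpow_neg_mul_genFracKernel (hρ : 0 < ρ) (z : ℂ) :
    ∫ u in Ioo (0 : ℝ) 1, (u : ℂ) ^ (-z) * genFracKernel ρ α u =
      (ρ : ℂ)⁻¹ * betaIntegral (1 - z / ρ) α := by
  rw [setIntegral_congr_fun measurableSet_Ioo (fun u hu => cpow_neg_mul_genFracKernel_eq hρ z hu),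
    integral_smul, integral_Ioo_comp_rpow
      (fun v : ℝ => (v : ℂ) ^ (1 - z / ρ - 1) * (1 - (v : ℂ)) ^ ((α : ℂ) - 1)) hρ,
    betaIntegral, intervalIntegral.integral_of_le zero_le_one, integral_Ioc_eq_integral_Ioo,
    smul_eq_mul]

theorem genFracIntegral_congr_ae {f g : ℝ → ℂ} (hfg : f =ᵐ[volume.restrict (Ioi 0)] g) {x : ℝ}
    (hx : 0 ≤ x) : genFracIntegral ρ α f x = genFracIntegral ρ α g x := by
  rw [genFracIntegral, genFracIntegral]
  congr 1
  refine intervalIntegral.integral_congr_ae ?_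
  filter_upwards [(ae_restrict_iff' measurableSet_Ioi).mp hfg] with t ht htx
  rw [uIoc_of_le hx] at htx
  rw [ht htx.1]

theorem kernel_comp_mul_eq_rpow_mul_genFracKernel {u x : ℝ} (hρ : 0 < ρ)
    (hu : u ∈ Ioo (0 : ℝ) 1) (hx : 0 < x) :
    (u * x) ^ (ρ - 1) * (x ^ ρ - (u * x) ^ ρ) ^ (α - 1) =
      x ^ (α * ρ - 1) * genFracKernel ρ α u := by
  have h1 : 0 ≤ 1 - u ^ ρ := sub_nonneg.mpr (rpow_le_one hu.1.le hu.2.le hρ.le)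
  have hxρ : x ^ ρ - (u * x) ^ ρ = (1 - u ^ ρ) * x ^ ρ := by
    rw [mul_rpow hu.1.le hx.le]
    ring
  have hxα : x ^ (ρ - 1) * (x ^ ρ) ^ (α - 1) = x ^ (α * ρ - 1) := by
    rw [← rpow_mul hx.le, ← rpow_add hx]
    ring_nf
  rw [hxρ, mul_rpow hu.1.le hx.le, mul_rpow h1 (rpow_nonneg hx.le _), ← hxα, genFracKernel]
  ring

theorem genFracIntegral_eq_cpow_smul_setIntegral (hρ : 0 < ρ) (f : ℝ → ℂ) {x : ℝ} (hx : 0 < x) :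
    genFracIntegral ρ α f x = (ρ ^ (1 - α) / Real.Gamma α) •
      (x : ℂ) ^ ((α : ℂ) * ρ) • ∫ u in Ioo (0 : ℝ) 1, (genFracKernel ρ α u : ℂ) • f (u * x) := by
  have hsubst := intervalIntegral.smul_integral_comp_mul_right (a := (0 : ℝ)) (b := 1)
    (fun τ => (τ ^ (ρ - 1) * (x ^ ρ - τ ^ ρ) ^ (α - 1)) • f τ) x
  rw [zero_mul, one_mul, intervalIntegral.integral_of_le zero_le_one,
    integral_Ioc_eq_integral_Ioo] at hsubst
  rw [genFracIntegral, ← hsubst,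
    setIntegral_congr_fun measurableSet_Ioo fun u hu => by
      rw [kernel_comp_mul_eq_rpow_mul_genFracKernel hρ hu hx, ← smul_smul],
    integral_smul, smul_smul x]
  have hpow : x * x ^ (α * ρ - 1) = x ^ (α * ρ) := by
    rw [rpow_sub_one hx.ne']
    field_simp
  congr 1
  simp only [hpow, real_smul, smul_eq_mul, ofReal_cpow hx.le]
  push_cast
  rfl

theorem ofReal_rpow_div_Gamma_mul_betaIntegral (hρ : 0 < ρ) (hα : 0 < α) {a : ℂ}
    (ha : 0 < a.re) :
    ((ρ ^ (1 - α) / Real.Gamma α : ℝ) : ℂ) * ((ρ : ℂ)⁻¹ * betaIntegral a α) =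
      Gamma a / (Gamma (a + α) * (ρ : ℂ) ^ (α : ℂ)) := by
  have hρ' : (ρ : ℂ) ≠ 0 := ofReal_ne_zero.mpr hρ.ne'
  have hα' : 0 < (α : ℂ).re := by simpa using hα
  have hΓa : Gamma (a + α) ≠ 0 := Gamma_ne_zero_of_re_pos (by rw [add_re]; positivity)
  have hΓα : Gamma (α : ℂ) ≠ 0 := Gamma_ne_zero_of_re_pos hα'
  have hβ : betaIntegral a α = Gamma a * Gamma (α : ℂ) / Gamma (a + α) := by
    rw [Gamma_mul_Gamma_eq_betaIntegral ha hα', mul_div_cancel_left₀ _ hΓa]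
  have hpow : ((ρ ^ (1 - α) : ℝ) : ℂ) = ρ / (ρ : ℂ) ^ (α : ℂ) := by
    rw [ofReal_cpow hρ.le, ofReal_sub, ofReal_one, cpow_sub _ _ hρ', cpow_one]
  have hρα : (ρ : ℂ) ^ (α : ℂ) ≠ 0 :=
    (cpow_ne_zero_iff_of_exponent_ne_zero (by simpa using hα.ne')).mpr hρ'
  rw [ofReal_div, hpow, ← Gamma_ofReal, hβ]
  field_simp

theorem mellin_genFracIntegral_congr_ae {f g : ℝ → ℂ} (hfg : f =ᵐ[volume.restrict (Ioi 0)] g)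
    (s : ℂ) : mellin (genFracIntegral ρ α f) s = mellin (genFracIntegral ρ α g) s :=
  setIntegral_congr_fun measurableSet_Ioi fun x hx => by
    rw [genFracIntegral_congr_ae hfg (le_of_lt hx)]

theorem mellin_genFracIntegral_eq_smul_betaIntegral (hρ : 0 < ρ) (hα : 0 < α) {f : ℝ → ℂ}
    (hfm : StronglyMeasurable f) {s : ℂ} (hf : MellinConvergent f (s + α * ρ))
    (hs : 0 < (1 - (s + α * ρ) / ρ).re) :
    mellin (genFracIntegral ρ α f) s = (ρ ^ (1 - α) / Real.Gamma α) •
      (((ρ : ℂ)⁻¹ * betaIntegral (1 - (s + α * ρ) / ρ) α) • mellin f (s + α * ρ)) := by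
  calc mellin (genFracIntegral ρ α f) s
      = mellin (fun x => (ρ ^ (1 - α) / Real.Gamma α) • (x : ℂ) ^ ((α : ℂ) * ρ) •
          ∫ u in Ioo (0 : ℝ) 1, (genFracKernel ρ α u : ℂ) • f (u * x)) s :=
        setIntegral_congr_fun measurableSet_Ioi fun x hx => by
          rw [genFracIntegral_eq_cpow_smul_setIntegral hρ f hx]
    _ = _ := by
        rw [mellin_const_smul, mellin_cpow_smul, mellin_setIntegral_smul_comp_mul measurableSet_Ioo
          Ioo_subset_Ioi_self hfm hf (integrableOn_cpow_neg_mul_genFracKernel hρ hα hs),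
          integral_cpow_neg_mul_genFracKernel hρ]

end GenFracKernel

theorem mellin_genFracIntegral_general (α ρ : ℝ) (s : ℂ) (hα : 0 < α) (hρ : 0 < ρ)
    (hs : s.re / ρ + α < 1) (f : ℝ → ℂ)
    (hf : IntegrableOn (fun t : ℝ => t ^ (s.re + α * ρ - 1) • f t) (Set.Ioi 0)) :
    mellin (genFracIntegral ρ α f) s =
      (Complex.Gamma (1 - s / ρ - α) / (Complex.Gamma (1 - s / ρ) * (ρ : ℂ) ^ (α : ℂ))) *
        mellin f (s + (α : ℂ) * (ρ : ℂ)) := by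
  have ha : 1 - (s + α * ρ) / ρ = 1 - s / ρ - α := by
    field_simp [ofReal_ne_zero.mpr hρ.ne']
    ring
  have ha_pos : 0 < (1 - s / ρ - α).re := by
    rw [sub_re, sub_re, one_re, div_ofReal_re, ofReal_re]
    linarith
  have hfm := aestronglyMeasurable_of_integrableOn_rpow_smul hf
  have hfz : MellinConvergent f (s + α * ρ) :=
    (mellinConvergent_iff_integrableOn_rpow_smul hfm).mpr (by simpa using hf)
  have hfg : f =ᵐ[volume.restrict (Ioi 0)] hfm.mk f := hfm.ae_eq_mk
  have hfgz : (fun t : ℝ => (t : ℂ) ^ (s + α * ρ - 1) • f t) =ᵐ[volume.restrict (Ioi 0)]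
      fun t => (t : ℂ) ^ (s + α * ρ - 1) • hfm.mk f t := hfg.mono fun t ht => by simp only [ht]
  rw [mellin_genFracIntegral_congr_ae hfg, show mellin f _ = mellin (hfm.mk f) _ from
    integral_congr_ae hfgz, mellin_genFracIntegral_eq_smul_betaIntegral hρ hα
    hfm.stronglyMeasurable_mk (hfz.congr hfgz) (ha ▸ ha_pos), real_smul, smul_eq_mul,
    ← mul_assoc, ha, ofReal_rpow_div_Gamma_mul_betaIntegral hρ hα ha_pos, sub_add_cancel]

/-- For `α > 0`, `ρ > 0` and `s : ℂ` with `Re(s)/ρ + α < 1`, if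
`t ↦ t^{Re(s)+αρ-1} f(t)` is integrable on `(0,∞)` and the Mellin transform of
`ρI^α_{0+} f` exists at `s`, then
`M[ρI^α_{0+} f](s) = [Γ(1 - s/ρ - α)/(Γ(1 - s/ρ) ρ^α)] M[f](s + αρ)`. -/
theorem mellin_genFracIntegral (α ρ : ℝ) (s : ℂ) (hα : 0 < α) (hρ : 0 < ρ)
    (hs : s.re / ρ + α < 1) (f : ℝ → ℂ)
    (hf : IntegrableOn (fun t : ℝ => t ^ (s.re + α * ρ - 1) • f t) (Set.Ioi 0))
    (hM : MellinConvergent (genFracIntegral ρ α f) s) :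
    mellin (genFracIntegral ρ α f) s =
      (Complex.Gamma (1 - s / ρ - α) / (Complex.Gamma (1 - s / ρ) * (ρ : ℂ) ^ (α : ℂ))) *
        mellin f (s + (α : ℂ) * (ρ : ℂ)) :=
  mellin_genFracIntegral_general α ρ s hα hρ hs f hf
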